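/- arXiv:2309.03998 — 2 statements merged into one kernel-verified Lean document; each statement's English description precedes it below -/
import Mathlib

section
/- Let (x_k), (y_k) be generated by the Chambolle–Pock iteration x_{k+1} = prox_{τf}(x_k − τ L* y_k), y_{k+1} = prox_{σ g*}(y_k + σ L(x_{k+1} + θ(x_{k+1} − x_k))) with τ, σ > 0, let (x⋆, y⋆) be a KKT point (−L*y⋆ ∈ ∂f(x⋆), Lx⋆ ∈ ∂g*(y⋆)), and define F_k = f(x_{k+1}) − f(x⋆) + ⟨L*y⋆, x_{k+1} − x⋆⟩. Then for every nonnegative integer k, F_k − F_{k+1} ≤ (1/τ)⟨x_k − x_{k+1}, x_{k+1} − x_{k+2}⟩ + ⟨y⋆ − y_k, Lx_{k+1} − Lx_{k+2}⟩. -/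
open scoped RealInnerProductSpace
open Filter Topology

noncomputable section

/-- The convex subdifferential of an extended-real-valued function:
`∂f(x) = { u : ∀ z, f z ≥ f x + ⟪u, z - x⟫ }`. -/
def ESubdiff {E : Type*} [NormedAddCommGroup E] [InnerProductSpace ℝ E]
    (f : E → EReal) (x : E) : Set E :=
  {u | ∀ z : E, f x + ((⟪u, z - x⟫ : ℝ) : EReal) ≤ f z}

/-- Properness of an extended-real-valued function: it never takes the value `⊥`
and is not identically `⊤`. -/
def EProper {E : Type*} (f : E → EReal) : Prop :=
  (∃ x, f x ≠ ⊤) ∧ ∀ x, f x ≠ ⊥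

/-- Convexity of an extended-real-valued function. -/
def EConvex {E : Type*} [NormedAddCommGroup E] [NormedSpace ℝ E] (f : E → EReal) : Prop :=
  ∀ x y : E, ∀ a b : ℝ, 0 ≤ a → 0 ≤ b → a + b = 1 →
    f (a • x + b • y) ≤ (a : EReal) * f x + (b : EReal) * f y

/-- The convex (Fenchel) conjugate `g*(y) = sup_x (⟪x, y⟫ - g x)`. -/
def EConj {E : Type*} [NormedAddCommGroup E] [InnerProductSpace ℝ E]
    (g : E → EReal) (y : E) : EReal :=
  ⨆ x : E, ((⟪x, y⟫ : ℝ) : EReal) - g x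

/-- `IsProx τ f x p` states that `p = prox_{τ f}(x)`, i.e. `p` minimizes
`fun z => f z + (1/(2τ)) ‖z - x‖²`. -/
def IsProx {E : Type*} [NormedAddCommGroup E] [InnerProductSpace ℝ E]
    (τ : ℝ) (f : E → EReal) (x p : E) : Prop :=
  ∀ z : E, f p + ((1 / (2 * τ) * ‖p - x‖ ^ 2 : ℝ) : EReal)
      ≤ f z + ((1 / (2 * τ) * ‖z - x‖ ^ 2 : ℝ) : EReal)

/-- The Lagrangian `𝓛(x, y) = f x + ⟪y, L x⟫ - g*(y)` of the saddle-point problem. -/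
def Lagr {E F : Type*} [NormedAddCommGroup E] [InnerProductSpace ℝ E]
    [NormedAddCommGroup F] [InnerProductSpace ℝ F]
    (f : E → EReal) (gs : F → EReal) (L : E →L[ℝ] F) (x : E) (y : F) : EReal :=
  f x + ((⟪y, L x⟫ : ℝ) : EReal) - gs y

/-!
Since `F k - F (k + 1) = f x₁ - f x₂ + ⟪y⋆, L (x₁ - x₂)⟫` with `x₁ = x (k + 1)`, `x₂ = x (k + 2)`,
everything reduces to the variational inequality of the proximal step producing `x₁`: its
optimality, tested against `x₂` along the segment `[x₁, x₂]`, gives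
`f x₁ ≤ f x₂ + ⟪(x k - x₁) / τ - L* (y k), x₁ - x₂⟫`.
The KKT inclusion makes `f x⋆` finite, so that the `EReal` differences are honest real ones.
-/

lemma le_of_forall_mem_Ioc_le_add_mul {a b c : ℝ} (h : ∀ t ∈ Set.Ioc (0 : ℝ) 1, a ≤ b + t * c) :
    a ≤ b := by
  have hlim : Tendsto (fun t : ℝ => b + t * c) (𝓝[>] 0) (𝓝 b) := by
    have : Continuous fun t : ℝ => b + t * c := by fun_prop
    simpa using (this.tendsto 0).mono_left nhdsWithin_le_nhds
  exact ge_of_tendsto hlim (Filter.mem_of_superset (Ioc_mem_nhdsGT one_pos) h)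

lemma ne_top_of_mem_ESubdiff {E : Type*} [NormedAddCommGroup E] [InnerProductSpace ℝ E]
    {f : E → EReal} {x u z : E} (hu : u ∈ ESubdiff f x) (hz : f z ≠ ⊤) : f x ≠ ⊤ := by
  intro hx
  have := hu z
  rw [hx, EReal.top_add_of_ne_bot (EReal.coe_ne_bot _), top_le_iff] at this
  exact hz this

lemma IsProx.ne_top {E : Type*} [NormedAddCommGroup E] [InnerProductSpace ℝ E]
    {τ : ℝ} {f : E → EReal} {v p z : E} (hp : IsProx τ f v p) (hz : f z ≠ ⊤) : f p ≠ ⊤ := by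
  intro h
  have := hp z
  rw [h, EReal.top_add_of_ne_bot (EReal.coe_ne_bot _), top_le_iff] at this
  exact (EReal.add_lt_top hz (EReal.coe_ne_top _)).ne this

lemma EConvex.le_coe_toReal_combo {E : Type*} [NormedAddCommGroup E] [NormedSpace ℝ E]
    {f : E → EReal} (hf : EConvex f) (hbot : ∀ w, f w ≠ ⊥) {x y : E} (hx : f x ≠ ⊤)
    (hy : f y ≠ ⊤) {a b : ℝ} (ha : 0 ≤ a) (hb : 0 ≤ b) (hab : a + b = 1) :
    f (a • x + b • y) ≤ ((a * (f x).toReal + b * (f y).toReal : ℝ) : EReal) := by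
  have h := hf x y a b ha hb hab
  rwa [← EReal.coe_toReal hx (hbot x), ← EReal.coe_toReal hy (hbot y)] at h

lemma IsProx.toReal_le_add_inner {E : Type*} [NormedAddCommGroup E] [InnerProductSpace ℝ E]
    {f : E → EReal} (hf : EConvex f) (hbot : ∀ w, f w ≠ ⊥) {τ : ℝ} (hτ : 0 < τ) {v p z : E}
    (hp : IsProx τ f v p) (hz : f z ≠ ⊤) :
    (f p).toReal ≤ (f z).toReal + τ⁻¹ * ⟪p - v, z - p⟫ := by
  have hpt : f p ≠ ⊤ := hp.ne_top hz
  set fp := (f p).toReal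
  set fz := (f z).toReal
  refine le_of_forall_mem_Ioc_le_add_mul (c := ‖z - p‖ ^ 2 / (2 * τ)) fun t ⟨ht0, ht1⟩ => ?_
  -- test the minimality of `p` against `p + t • (z - p)` and let `t → 0`
  have hseg := hf.le_coe_toReal_combo hbot hpt hz (sub_nonneg.2 ht1) ht0.le (sub_add_cancel 1 t)
  have hmin := (hp ((1 - t) • p + t • z)).trans (add_le_add_left hseg _)
  rw [← EReal.coe_toReal hpt (hbot p), EReal.toReal_coe] at hmin
  norm_cast at hmin
  have hnorm : ‖(1 - t) • p + t • z - v‖ ^ 2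
      = ‖p - v‖ ^ 2 + 2 * t * ⟪p - v, z - p⟫ + t ^ 2 * ‖z - p‖ ^ 2 := by
    rw [show (1 - t) • p + t • z - v = (p - v) + t • (z - p) by module, norm_add_sq_real,
      inner_smul_right, norm_smul, mul_pow, Real.norm_eq_abs, sq_abs]
    ring
  rw [hnorm] at hmin
  have key : t * fp ≤ t * (fz + τ⁻¹ * ⟪p - v, z - p⟫ + t * (‖z - p‖ ^ 2 / (2 * τ))) := by
    field_simp at hmin ⊢
    nlinarith
  exact le_of_mul_le_mul_left key ht0

lemma inv_mul_inner_sub_sub_smul_adjoint {E F : Type*} [NormedAddCommGroup E]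
    [InnerProductSpace ℝ E] [CompleteSpace E] [NormedAddCommGroup F] [InnerProductSpace ℝ F]
    [CompleteSpace F] (L : E →L[ℝ] F) {τ : ℝ} (hτ : τ ≠ 0) (p x d : E) (y : F) :
    τ⁻¹ * ⟪p - (x - τ • ContinuousLinearMap.adjoint L y), d⟫ = τ⁻¹ * ⟪p - x, d⟫ + ⟪y, L d⟫ := by
  rw [sub_sub_eq_add_sub, add_sub_right_comm, inner_add_left, real_inner_smul_left,
    ContinuousLinearMap.adjoint_inner_left, mul_add, inv_mul_cancel_left₀ hτ]

theorem Fk_sub_Fk_succ_bound_general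
    {𝓗 𝓖 : Type*}
    [NormedAddCommGroup 𝓗] [InnerProductSpace ℝ 𝓗] [CompleteSpace 𝓗]
    [NormedAddCommGroup 𝓖] [InnerProductSpace ℝ 𝓖] [CompleteSpace 𝓖]
    (f : 𝓗 → EReal)
    (hf₁ : EProper f) (hf₂ : EConvex f)
    (L : 𝓗 →L[ℝ] 𝓖)
    (τ : ℝ) (hτ : 0 < τ)
    (xstar : 𝓗) (ystar : 𝓖)
    (hkkt₁ : -((ContinuousLinearMap.adjoint L) ystar) ∈ ESubdiff f xstar)
    (x : ℕ → 𝓗) (y : ℕ → 𝓖)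
    (hx : ∀ k : ℕ, IsProx τ f (x k - τ • (ContinuousLinearMap.adjoint L) (y k)) (x (k + 1)))
    (F : ℕ → EReal)
    (hF : ∀ k : ℕ, F k = f (x (k + 1)) - f xstar
      + ((⟪(ContinuousLinearMap.adjoint L) ystar, x (k + 1) - xstar⟫ : ℝ) : EReal))
    :
    ∀ k : ℕ, F k - F (k + 1) ≤ ((1 / τ * ⟪x k - x (k + 1), x (k + 1) - x (k + 2)⟫
      + ⟪ystar - y k, L (x (k + 1)) - L (x (k + 2))⟫ : ℝ) : EReal) := by
  intro k
  obtain ⟨⟨z, hz⟩, hbot⟩ := hf₁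
  have hstar : f xstar ≠ ⊤ := ne_top_of_mem_ESubdiff hkkt₁ hz
  have hFreal : ∀ j, F j = ((f (x (j + 1))).toReal - (f xstar).toReal
      + ⟪ystar, L (x (j + 1) - xstar)⟫ : ℝ) := fun j => by
    rw [hF j, ← EReal.coe_toReal ((hx j).ne_top hz) (hbot _), ← EReal.coe_toReal hstar (hbot _),
      ContinuousLinearMap.adjoint_inner_left]
    norm_cast
  rw [hFreal, hFreal, ← EReal.coe_sub, EReal.coe_le_coe_iff]
  have hprox := (hx k).toReal_le_add_inner hf₂ hbot hτ ((hx (k + 1)).ne_top hz)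
  rw [inv_mul_inner_sub_sub_smul_adjoint L hτ.ne'] at hprox
  have hswap : ⟪x k - x (k + 1), x (k + 1) - x (k + 2)⟫
      = ⟪x (k + 1) - x k, x (k + 2) - x (k + 1)⟫ := by
    rw [← inner_neg_neg, neg_sub, neg_sub]
  rw [one_div, hswap]
  simp only [map_sub, inner_sub_left, inner_sub_right] at hprox ⊢
  linarith

theorem Fk_sub_Fk_succ_bound
    {𝓗 𝓖 : Type*}
    [NormedAddCommGroup 𝓗] [InnerProductSpace ℝ 𝓗] [CompleteSpace 𝓗]
    [NormedAddCommGroup 𝓖] [InnerProductSpace ℝ 𝓖] [CompleteSpace 𝓖]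
    (f : 𝓗 → EReal) (g : 𝓖 → EReal) (gs : 𝓖 → EReal)
    (hf₁ : EProper f) (hf₂ : EConvex f) (hf₃ : LowerSemicontinuous f)
    (hg₁ : EProper g) (hg₂ : EConvex g) (hg₃ : LowerSemicontinuous g)
    (hgs : gs = EConj g)
    (L : 𝓗 →L[ℝ] 𝓖) (hL : L ≠ 0)
    (τ σ θ : ℝ) (hτ : 0 < τ) (hσ : 0 < σ)
    (θ : ℝ)
    (xstar : 𝓗) (ystar : 𝓖)
    (hkkt₁ : -((ContinuousLinearMap.adjoint L) ystar) ∈ ESubdiff f xstar)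
    (hkkt₂ : L xstar ∈ ESubdiff gs ystar)
    (x : ℕ → 𝓗) (y : ℕ → 𝓖)
    (hx : ∀ k : ℕ, IsProx τ f (x k - τ • (ContinuousLinearMap.adjoint L) (y k)) (x (k + 1)))
    (hy : ∀ k : ℕ,
      IsProx σ gs (y k + σ • L (x (k + 1) + θ • (x (k + 1) - x k))) (y (k + 1)))
    (F : ℕ → EReal)
    (hF : ∀ k : ℕ, F k = f (x (k + 1)) - f xstar
      + ((⟪(ContinuousLinearMap.adjoint L) ystar, x (k + 1) - xstar⟫ : ℝ) : EReal))
    :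
    ∀ k : ℕ, F k - F (k + 1) ≤ ((1 / τ * ⟪x k - x (k + 1), x (k + 1) - x (k + 2)⟫
      + ⟪ystar - y k, L (x (k + 1)) - L (x (k + 2))⟫ : ℝ) : EReal) :=
  Fk_sub_Fk_succ_bound_general f hf₁ hf₂ L τ hτ xstar ystar hkkt₁ x y hx F hF
end
end

section
/- Let (x_k), (y_k) be generated by the Chambolle–Pock iteration x_{k+1} = prox_{τf}(x_k − τ L* y_k), y_{k+1} = prox_{σ g*}(y_k + σ L(x_{k+1} + θ(x_{k+1} − x_k))), with θ ≥ 1/2 and τ, σ > 0 satisfying τσ‖L‖² ≤ 4/(1 + 2θ), at least one of these two inequalities being strict, and let (x⋆, y⋆) be a KKT point (−L*y⋆ ∈ ∂f(x⋆), Lx⋆ ∈ ∂g*(y⋆)). Define F_k = f(x_{k+1}) − f(x⋆) + ⟨L*y⋆, x_{k+1} − x⋆⟩, G_k = g*(y_{k+1}) − g*(y⋆) − ⟨Lx⋆, y_{k+1} − y⋆⟩, and V_k = θF_k + (1/2τ)‖x_{k+1} − x⋆‖² + (1/2σ)‖y_k − y⋆ + σθ(Lx_{k+1} − Lx_k)‖²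 + (θ/2τ)‖x_{k+1} − x_k‖² − (σ(4θ²+1)/16)‖Lx_{k+1} − Lx_k‖². Then for every nonnegative integer k, the Lyapunov inequality holds: V_{k+1} − V_k + F_k + G_k ≤ −(1/2σ)‖y_{k+1} − y_k − σ((1/2)(Lx_{k+1} − Lx_{k+2}) − θ(Lx_k − Lx_{k+1}))‖² − ((8θ − τσ‖L‖²(4θ²+1))/(16τ))‖x_{k+2} − x_{k+1} − (4(1 − τσθ‖L‖²)/(8θ − τσ‖L‖²(4θ²+1)))(x_{k+1} − x_k)‖² − ((4θ² − 1)(4 − τσ‖L‖²(2θ+1))(4 − τσ‖L‖²(2θ−1))/(16τ(8θ − τσ‖L‖²(4θ²+1))))‖x_{k+1} − x_k‖². -/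
open scoped RealInnerProductSpace
open Filter Topology

noncomputable section

/-! The proximal steps say `τ⁻¹ (x_k - τ L* y_k - x_{k+1}) ∈ ∂f(x_{k+1})` and
`σ⁻¹ (y_k + σ L x̄_k - y_{k+1}) ∈ ∂g*(y_{k+1})`. The inequality is the sum of the subgradient
inequalities at `x_{k+2}` tested at `x⋆` and at `x_{k+1}` (weights `1` and `θ - 1/2`), at
`x_{k+1}` tested at `x_{k+2}` (weight `1/2`) and at `y_{k+1}` tested at `y⋆` (weight `1`), plus
multiples of `‖L‖² ‖d‖² - ‖L d‖² ≥ 0` for three differences `d` of iterates; the rest is an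
identity. It comes out with the primal part of the right-hand side as a quadratic form in
`x_{k+2} - x_{k+1}` and `x_{k+1} - x_k`. The stated right-hand side is that form with the square
completed, which needs `β = 8θ - τσ‖L‖²(4θ² + 1) ≠ 0` and rests on
`16 (1 - τσθ‖L‖²)² + (4θ² - 1)(4 - τσ‖L‖²(2θ + 1))(4 - τσ‖L‖²(2θ - 1)) = β²`. -/

open scoped InnerProduct

theorem EProper.exists_eq_coe {E : Type*} {f : E → EReal} (hf : EProper f) {x : E}
    (hx : f x ≠ ⊤) : ∃ a : ℝ, f x = a :=
  ⟨_, (EReal.coe_toReal hx (hf.2 x)).symm⟩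

theorem ContinuousLinearMap.norm_apply_sq_le {E F : Type*} [SeminormedAddCommGroup E]
    [NormedSpace ℝ E] [SeminormedAddCommGroup F] [NormedSpace ℝ F] (L : E →L[ℝ] F) (x : E) :
    ‖L x‖ ^ 2 ≤ ‖L‖ ^ 2 * ‖x‖ ^ 2 := by
  rw [← mul_pow]
  exact pow_le_pow_left₀ (norm_nonneg _) (L.le_opNorm x) 2

theorem chambollePock_margin_pos {θ q : ℝ} (hθ : 1 / 2 ≤ θ) (hq : q ≤ 4 / (1 + 2 * θ))
    (hstrict : 1 / 2 < θ ∨ q < 4 / (1 + 2 * θ)) : 0 < 8 * θ - q * (4 * θ ^ 2 + 1) := by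
  have h2θ : 0 < 1 + 2 * θ := by linarith
  have hq' : q * (1 + 2 * θ) ≤ 4 := (le_div_iff₀ h2θ).mp hq
  -- `(1 + 2θ) (8θ - q (4θ² + 1)) ≥ 8θ - 4`, with equality only if `q (1 + 2θ) = 4`
  suffices 0 < (1 + 2 * θ) * (8 * θ - q * (4 * θ ^ 2 + 1)) from pos_of_mul_pos_right this h2θ.le
  rcases hstrict with hθ' | hq''
  · nlinarith
  · have := (lt_div_iff₀ h2θ).mp hq''
    nlinarith

section ExtendedConvex

variable {E : Type*} [NormedAddCommGroup E] [InnerProductSpace ℝ E] {f : E → EReal}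

theorem completed_square_norm_eq {β γ δ : ℝ} (hβ : β ≠ 0) (hδ : γ ^ 2 + δ = β ^ 2) (c : ℝ)
    (u v : E) :
    β / c * ‖u - (γ / β) • v‖ ^ 2 + δ / (c * β) * ‖v‖ ^ 2
      = (β * (‖u‖ ^ 2 + ‖v‖ ^ 2) - 2 * γ * ⟪u, v⟫) / c := by
  rw [norm_sub_sq_real, norm_smul, real_inner_smul_right, Real.norm_eq_abs, mul_pow, sq_abs]
  field_simp
  linear_combination (‖v‖ ^ 2 / c) * hδ

theorem EConj.ne_bot (hf : EProper f) (y : E) : EConj f y ≠ ⊥ := by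
  obtain ⟨x, hx⟩ := hf.1
  obtain ⟨a, ha⟩ := hf.exists_eq_coe hx
  refine ne_bot_of_le_ne_bot ?_ (le_iSup (fun x => ((⟪x, y⟫ : ℝ) : EReal) - f x) x)
  rw [ha, ← EReal.coe_sub]
  exact EReal.coe_ne_bot _

theorem EConj.eConvex (hf : ∀ x, f x ≠ ⊥) : EConvex (EConj f) := by
  intro y₁ y₂ a b ha hb hab
  refine iSup_le fun x => ?_
  rcases eq_or_ne (f x) ⊤ with hx | hx
  · rw [hx, EReal.sub_top]
    exact bot_le
  have h₁ : ((⟪x, y₁⟫ : ℝ) : EReal) - f x ≤ EConj f y₁ :=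
    le_iSup (fun x => ((⟪x, y₁⟫ : ℝ) : EReal) - f x) x
  have h₂ : ((⟪x, y₂⟫ : ℝ) : EReal) - f x ≤ EConj f y₂ :=
    le_iSup (fun x => ((⟪x, y₂⟫ : ℝ) : EReal) - f x) x
  obtain ⟨r, hr⟩ : ∃ r : ℝ, f x = r := ⟨_, (EReal.coe_toReal hx (hf x)).symm⟩
  simp only [hr, ← EReal.coe_sub] at h₁ h₂ ⊢
  calc ((⟪x, a • y₁ + b • y₂⟫ - r : ℝ) : EReal)
      = (a : EReal) * ((⟪x, y₁⟫ - r : ℝ) : EReal) + (b : EReal) * ((⟪x, y₂⟫ - r : ℝ) : EReal) := by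
        norm_cast
        rw [inner_add_right, real_inner_smul_right, real_inner_smul_right]
        linear_combination r * hab
    _ ≤ (a : EReal) * EConj f y₁ + (b : EReal) * EConj f y₂ := by gcongr

theorem IsProx.ne_top_s12 {τ : ℝ} {w p : E} (hf : EProper f) (hp : IsProx τ f w p) : f p ≠ ⊤ := by
  obtain ⟨z, hz⟩ := hf.1
  obtain ⟨a, ha⟩ := hf.exists_eq_coe hz
  intro h
  have hpz := hp z
  rw [h, EReal.top_add_coe, ha, ← EReal.coe_add, top_le_iff] at hpz
  exact EReal.coe_ne_top _ hpz

theorem IsProx.mem_eSubdiff {τ : ℝ} {w p : E} (hf : EProper f) (hconv : EConvex f) (hτ : 0 < τ)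
    (hp : IsProx τ f w p) : τ⁻¹ • (w - p) ∈ ESubdiff f p := by
  intro z
  obtain ⟨a, ha⟩ := hf.exists_eq_coe (hp.ne_top_s12 hf)
  rcases eq_or_ne (f z) ⊤ with hz | hz
  · rw [hz]
    exact le_top
  obtain ⟨b, hb⟩ := hf.exists_eq_coe hz
  rw [ha, hb]
  norm_cast
  -- compare `p` with `p + t (z - p)` in the prox inequality and let `t → 0⁺`
  have key : ∀ t : ℝ, 0 < t → t ≤ 1 →
      a + ⟪τ⁻¹ • (w - p), z - p⟫ - b ≤ t * (‖z - p‖ ^ 2 / (2 * τ)) := by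
    intro t ht ht1
    have hmix := hconv p z (1 - t) t (by linarith) ht.le (by ring)
    have hcmp := (hp _).trans (add_le_add hmix le_rfl)
    rw [ha, hb] at hcmp
    norm_cast at hcmp
    have hexp : (1 - t) • p + t • z - w = (p - w) + t • (z - p) := by module
    rw [hexp, norm_add_sq_real, norm_smul, Real.norm_eq_abs, abs_of_pos ht, mul_pow,
      real_inner_smul_right] at hcmp
    rw [real_inner_smul_left, ← neg_sub p w, inner_neg_left]
    have hτ' : τ ≠ 0 := hτ.ne'
    field_simp at hcmp ⊢
    nlinarith
  have hlim : Tendsto (fun t : ℝ => t * (‖z - p‖ ^ 2 / (2 * τ))) (𝓝[>] 0) (𝓝 0) :=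
    tendsto_nhdsWithin_of_tendsto_nhds
      ((continuous_id.mul continuous_const).tendsto' 0 0 (zero_mul _))
  have := ge_of_tendsto hlim (by
    filter_upwards [Ioc_mem_nhdsGT zero_lt_one] with t ht using key t ht.1 ht.2)
  linarith

theorem IsProx.coe_add_inner_le {τ : ℝ} {w p z : E} (hf : EProper f) (hconv : EConvex f)
    (hτ : 0 < τ) (hp : IsProx τ f w p) {a b : ℝ} (ha : f p = a) (hb : f z = b) :
    a + ⟪τ⁻¹ • (w - p), z - p⟫ ≤ b := by
  have h := hp.mem_eSubdiff hf hconv hτ z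
  rw [ha, hb] at h
  exact_mod_cast h

end ExtendedConvex

section ChambollePock
variable {E F : Type*} [NormedAddCommGroup E] [InnerProductSpace ℝ E] [CompleteSpace E]
  [NormedAddCommGroup F] [InnerProductSpace ℝ F] [CompleteSpace F]

def lyapunovQuadratic (τ σ θ : ℝ) (L : E →L[ℝ] F) (xs : E) (ys : F) (x₀ x₁ : E) (y₀ : F) : ℝ :=
  1 / (2 * τ) * ‖x₁ - xs‖ ^ 2 + 1 / (2 * σ) * ‖y₀ - ys + (σ * θ) • (L x₁ - L x₀)‖ ^ 2
    + θ / (2 * τ) * ‖x₁ - x₀‖ ^ 2 - σ * (4 * θ ^ 2 + 1) / 16 * ‖L x₁ - L x₀‖ ^ 2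

theorem lyapunov_inequality_of_subgradients (L : E →L[ℝ] F) {τ σ θ : ℝ} (hτ : 0 < τ)
    (hσ : 0 < σ) (hθ : 1 / 2 ≤ θ)
    {xs x₀ x₁ x₂ : E} {ys y₀ y₁ : F} {fs f₁ f₂ gs g₁ : ℝ}
    (hx₂s : f₂ + ⟪τ⁻¹ • (x₁ - τ • (L†) y₁ - x₂), xs - x₂⟫ ≤ fs)
    (hx₂₁ : f₂ + ⟪τ⁻¹ • (x₁ - τ • (L†) y₁ - x₂), x₁ - x₂⟫ ≤ f₁)
    (hx₁₂ : f₁ + ⟪τ⁻¹ • (x₀ - τ • (L†) y₀ - x₁), x₂ - x₁⟫ ≤ f₂)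
    (hy₁s : g₁ + ⟪σ⁻¹ • (y₀ + σ • L (x₁ + θ • (x₁ - x₀)) - y₁), ys - y₁⟫ ≤ gs) :
    θ * (f₂ - fs + ⟪(L†) ys, x₂ - xs⟫) + lyapunovQuadratic τ σ θ L xs ys x₁ x₂ y₁
      - (θ * (f₁ - fs + ⟪(L†) ys, x₁ - xs⟫) + lyapunovQuadratic τ σ θ L xs ys x₀ x₁ y₀)
      + (f₁ - fs + ⟪(L†) ys, x₁ - xs⟫) + (g₁ - gs - ⟪L xs, y₁ - ys⟫)
    ≤ -(1 / (2 * σ)) * ‖y₁ - y₀ - σ • ((1 / 2 : ℝ) • (L x₁ - L x₂) - θ • (L x₀ - L x₁))‖ ^ 2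
      - ((8 * θ - τ * σ * ‖L‖ ^ 2 * (4 * θ ^ 2 + 1)) * (‖x₂ - x₁‖ ^ 2 + ‖x₁ - x₀‖ ^ 2)
        - 2 * (4 * (1 - τ * σ * θ * ‖L‖ ^ 2)) * ⟪x₂ - x₁, x₁ - x₀⟫) / (16 * τ) := by
  linear_combination (norm := skip) hx₂s + (θ - 1 / 2) * hx₂₁ + (1 / 2) * hx₁₂
    + hy₁s + (σ * (2 * θ - 1) ^ 2 / 16) * L.norm_apply_sq_le (x₁ - x₀)
    + (σ * (2 * θ - 1) ^ 2 / 16) * L.norm_apply_sq_le (x₂ - x₁)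
    + (σ * θ / 4) * L.norm_apply_sq_le (x₁ - x₀ - (x₂ - x₁))
  refine le_of_eq ?_
  unfold lyapunovQuadratic
  simp only [map_sub, map_add, map_smul, inner_sub_left, inner_sub_right, inner_add_left,
    inner_add_right, real_inner_smul_right, ContinuousLinearMap.adjoint_inner_left,
    ContinuousLinearMap.adjoint_inner_right, ← real_inner_self_eq_norm_sq, real_inner_comm]
  field_simp
  ring

end ChambollePock

theorem lyapunov_inequality_general
    {𝓗 𝓖 : Type*}
    [NormedAddCommGroup 𝓗] [InnerProductSpace ℝ 𝓗] [CompleteSpace 𝓗]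
    [NormedAddCommGroup 𝓖] [InnerProductSpace ℝ 𝓖] [CompleteSpace 𝓖]
    (f : 𝓗 → EReal) (g : 𝓖 → EReal) (gs : 𝓖 → EReal)
    (hf₁ : EProper f) (hf₂ : EConvex f)
    (hg₁ : EProper g)
    (hgs : gs = EConj g)
    (L : 𝓗 →L[ℝ] 𝓖)
    (τ σ θ : ℝ) (hτ : 0 < τ) (hσ : 0 < σ)
    (hθ : 1 / 2 ≤ θ) (hstep : τ * σ * ‖L‖ ^ 2 ≤ 4 / (1 + 2 * θ))
    (hstrict : 1 / 2 < θ ∨ τ * σ * ‖L‖ ^ 2 < 4 / (1 + 2 * θ))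
    (xstar : 𝓗) (ystar : 𝓖)
    (x : ℕ → 𝓗) (y : ℕ → 𝓖)
    (hx : ∀ k : ℕ, IsProx τ f (x k - τ • (ContinuousLinearMap.adjoint L) (y k)) (x (k + 1)))
    (hy : ∀ k : ℕ,
      IsProx σ gs (y k + σ • L (x (k + 1) + θ • (x (k + 1) - x k))) (y (k + 1)))
    (F : ℕ → EReal)
    (hF : ∀ k : ℕ, F k = f (x (k + 1)) - f xstar
      + ((⟪(ContinuousLinearMap.adjoint L) ystar, x (k + 1) - xstar⟫ : ℝ) : EReal))
    (G : ℕ → EReal)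
    (hG : ∀ k : ℕ, G k = gs (y (k + 1)) - gs ystar
      - ((⟪L xstar, y (k + 1) - ystar⟫ : ℝ) : EReal))
    (V : ℕ → EReal)
    (hV : ∀ k : ℕ, V k = (θ : EReal) * F k
      + ((1 / (2 * τ) * ‖x (k + 1) - xstar‖ ^ 2
        + 1 / (2 * σ) * ‖y k - ystar + (σ * θ) • (L (x (k + 1)) - L (x k))‖ ^ 2
        + θ / (2 * τ) * ‖x (k + 1) - x k‖ ^ 2
        - σ * (4 * θ ^ 2 + 1) / 16 * ‖L (x (k + 1)) - L (x k)‖ ^ 2 : ℝ) : EReal))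
    :
    ∀ k : ℕ, V (k + 1) - V k + F k + G k ≤
      ((-(1 / (2 * σ)) * ‖y (k + 1) - y k
          - σ • ((1 / 2 : ℝ) • (L (x (k + 1)) - L (x (k + 2)))
            - θ • (L (x k) - L (x (k + 1))))‖ ^ 2
        - (8 * θ - τ * σ * ‖L‖ ^ 2 * (4 * θ ^ 2 + 1)) / (16 * τ)
          * ‖x (k + 2) - x (k + 1)
            - (4 * (1 - τ * σ * θ * ‖L‖ ^ 2) / (8 * θ - τ * σ * ‖L‖ ^ 2 * (4 * θ ^ 2 + 1)))
              • (x (k + 1) - x k)‖ ^ 2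
        - (4 * θ ^ 2 - 1) * (4 - τ * σ * ‖L‖ ^ 2 * (2 * θ + 1))
            * (4 - τ * σ * ‖L‖ ^ 2 * (2 * θ - 1))
            / (16 * τ * (8 * θ - τ * σ * ‖L‖ ^ 2 * (4 * θ ^ 2 + 1)))
          * ‖x (k + 1) - x k‖ ^ 2 : ℝ) : EReal) := by
  intro k
  rcases eq_or_ne (f xstar) ⊤ with hfs | hfs
  · rw [hF k, hfs, EReal.sub_top, EReal.bot_add, EReal.add_bot, EReal.bot_add]
    exact bot_le
  rcases eq_or_ne (gs ystar) ⊤ with hgs' | hgs'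
  · rw [hG k, hgs', EReal.sub_top, EReal.bot_sub, EReal.add_bot]
    exact bot_le
  have hgp : EProper gs := ⟨⟨ystar, hgs'⟩, hgs ▸ EConj.ne_bot hg₁⟩
  have hgc : EConvex gs := hgs ▸ EConj.eConvex hg₁.2
  have hx₂ : IsProx τ f (x (k + 1) - τ • (L†) (y (k + 1))) (x (k + 2)) := hx (k + 1)
  obtain ⟨fs, hfs⟩ := hf₁.exists_eq_coe hfs
  obtain ⟨f₁, hf₁x⟩ := hf₁.exists_eq_coe ((hx k).ne_top_s12 hf₁)
  obtain ⟨f₂, hf₂x⟩ := hf₁.exists_eq_coe (hx₂.ne_top_s12 hf₁)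
  obtain ⟨gs₀, hgs₀⟩ := hgp.exists_eq_coe hgs'
  obtain ⟨g₁, hg₁y⟩ := hgp.exists_eq_coe ((hy k).ne_top_s12 hgp)
  have hreal := lyapunov_inequality_of_subgradients L hτ hσ hθ
    (hx₂.coe_add_inner_le hf₁ hf₂ hτ hf₂x hfs) (hx₂.coe_add_inner_le hf₁ hf₂ hτ hf₂x hf₁x)
    ((hx k).coe_add_inner_le hf₁ hf₂ hτ hf₁x hf₂x) ((hy k).coe_add_inner_le hgp hgc hσ hg₁y hgs₀)
  have hsq := completed_square_norm_eq (γ := 4 * (1 - τ * σ * θ * ‖L‖ ^ 2))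
    (δ := (4 * θ ^ 2 - 1) * (4 - τ * σ * ‖L‖ ^ 2 * (2 * θ + 1))
      * (4 - τ * σ * ‖L‖ ^ 2 * (2 * θ - 1)))
    (chambollePock_margin_pos hθ hstep hstrict).ne' (by ring) (16 * τ)
    (x (k + 2) - x (k + 1)) (x (k + 1) - x k)
  have hV₁ : V k = θ * F k + lyapunovQuadratic τ σ θ L xstar ystar (x k) (x (k + 1)) (y k) := hV k
  have hV₂ : V (k + 1) = θ * F (k + 1)
      + lyapunovQuadratic τ σ θ L xstar ystar (x (k + 1)) (x (k + 2)) (y (k + 1)) := hV (k + 1)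
  have hF₂ : F (k + 1) = f (x (k + 2)) - f xstar
      + ((⟪(L†) ystar, x (k + 2) - xstar⟫ : ℝ) : EReal) := hF (k + 1)
  rw [hV₁, hV₂, hF₂, hF k, hG k, hf₁x, hf₂x, hfs, hg₁y, hgs₀]
  norm_cast
  linarith

theorem lyapunov_inequality
    {𝓗 𝓖 : Type*}
    [NormedAddCommGroup 𝓗] [InnerProductSpace ℝ 𝓗] [CompleteSpace 𝓗]
    [NormedAddCommGroup 𝓖] [InnerProductSpace ℝ 𝓖] [CompleteSpace 𝓖]
    (f : 𝓗 → EReal) (g : 𝓖 → EReal) (gs : 𝓖 → EReal)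
    (hf₁ : EProper f) (hf₂ : EConvex f) (hf₃ : LowerSemicontinuous f)
    (hg₁ : EProper g) (hg₂ : EConvex g) (hg₃ : LowerSemicontinuous g)
    (hgs : gs = EConj g)
    (L : 𝓗 →L[ℝ] 𝓖) (hL : L ≠ 0)
    (τ σ θ : ℝ) (hτ : 0 < τ) (hσ : 0 < σ)
    (hθ : 1 / 2 ≤ θ) (hstep : τ * σ * ‖L‖ ^ 2 ≤ 4 / (1 + 2 * θ))
    (hstrict : 1 / 2 < θ ∨ τ * σ * ‖L‖ ^ 2 < 4 / (1 + 2 * θ))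
    (xstar : 𝓗) (ystar : 𝓖)
    (hkkt₁ : -((ContinuousLinearMap.adjoint L) ystar) ∈ ESubdiff f xstar)
    (hkkt₂ : L xstar ∈ ESubdiff gs ystar)
    (x : ℕ → 𝓗) (y : ℕ → 𝓖)
    (hx : ∀ k : ℕ, IsProx τ f (x k - τ • (ContinuousLinearMap.adjoint L) (y k)) (x (k + 1)))
    (hy : ∀ k : ℕ,
      IsProx σ gs (y k + σ • L (x (k + 1) + θ • (x (k + 1) - x k))) (y (k + 1)))
    (F : ℕ → EReal)
    (hF : ∀ k : ℕ, F k = f (x (k + 1)) - f xstar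
      + ((⟪(ContinuousLinearMap.adjoint L) ystar, x (k + 1) - xstar⟫ : ℝ) : EReal))
    (G : ℕ → EReal)
    (hG : ∀ k : ℕ, G k = gs (y (k + 1)) - gs ystar
      - ((⟪L xstar, y (k + 1) - ystar⟫ : ℝ) : EReal))
    (V : ℕ → EReal)
    (hV : ∀ k : ℕ, V k = (θ : EReal) * F k
      + ((1 / (2 * τ) * ‖x (k + 1) - xstar‖ ^ 2
        + 1 / (2 * σ) * ‖y k - ystar + (σ * θ) • (L (x (k + 1)) - L (x k))‖ ^ 2
        + θ / (2 * τ) * ‖x (k + 1) - x k‖ ^ 2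
        - σ * (4 * θ ^ 2 + 1) / 16 * ‖L (x (k + 1)) - L (x k)‖ ^ 2 : ℝ) : EReal))
    :
    ∀ k : ℕ, V (k + 1) - V k + F k + G k ≤
      ((-(1 / (2 * σ)) * ‖y (k + 1) - y k
          - σ • ((1 / 2 : ℝ) • (L (x (k + 1)) - L (x (k + 2)))
            - θ • (L (x k) - L (x (k + 1))))‖ ^ 2
        - (8 * θ - τ * σ * ‖L‖ ^ 2 * (4 * θ ^ 2 + 1)) / (16 * τ)
          * ‖x (k + 2) - x (k + 1)
            - (4 * (1 - τ * σ * θ * ‖L‖ ^ 2) / (8 * θ - τ * σ * ‖L‖ ^ 2 * (4 * θ ^ 2 + 1)))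
              • (x (k + 1) - x k)‖ ^ 2
        - (4 * θ ^ 2 - 1) * (4 - τ * σ * ‖L‖ ^ 2 * (2 * θ + 1))
            * (4 - τ * σ * ‖L‖ ^ 2 * (2 * θ - 1))
            / (16 * τ * (8 * θ - τ * σ * ‖L‖ ^ 2 * (4 * θ ^ 2 + 1)))
          * ‖x (k + 1) - x k‖ ^ 2 : ℝ) : EReal) :=
  lyapunov_inequality_general f g gs hf₁ hf₂ hg₁ hgs L τ σ θ hτ hσ hθ hstep hstrict xstar ystar x y
    hx hy F hF G hG V hV
end
end
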